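/- Let G be a graph and u a vertex with d(u) ≥ 10 distinct neighbors u₀,…,u_{t−1} arranged cyclically, and suppose that for each of at least 10 indices c_j, the edge uu_{c_j} lies in a subgraph Θ_{uc_j} isomorphic to Θ₄ on vertex set {u, u_{c_j−1}, u_{c_j}, u_{c_j+1}} (indices mod t). If G contains a triangle C avoiding u, then G contains a vertex-disjoint union of C₃ and Θ₄. -/

import Mathlib

/-- Θ₄ : K₄ minus the edge 1-3. -/
def theta4 : SimpleGraph (Fin 4) :=
  (SimpleGraph.completeGraph (Fin 4)).deleteEdges {s(1, 3)}

/-- C₃ ∪̇ Θ₄ : the vertex-disjoint union of a triangle and Θ₄. -/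
def c3Theta4 : SimpleGraph (Fin 3 ⊕ Fin 4) :=
  SimpleGraph.fromRel (fun x y =>
    match x, y with
    | Sum.inl a, Sum.inl b => a ≠ b
    | Sum.inr a, Sum.inr b => theta4.Adj a b
    | _, _ => False)

/-- `G` contains `H` as a subgraph. -/
def Contains {V W : Type} (G : SimpleGraph V) (H : SimpleGraph W) : Prop :=
  ∃ φ : H →g G, Function.Injective φ

/-!
The vertices of the triangle are hit by at most three of the indices `i` (those with `w i` on
the triangle), so at most nine indices `j` have one of `j - 1, j, j + 1` hit. With at least ten
indices carrying a Θ₄, one of them gives a Θ₄ on `{u, w (j - 1), w j, w (j + 1)}` disjoint from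
the triangle.
-/

open Function

lemma contains_c3Theta4_of_sumElim {V : Type} {G : SimpleGraph V} {f : Fin 3 → V} {g : Fin 4 → V}
    (hf : ∀ i j, i ≠ j → G.Adj (f i) (f j)) (hg : ∀ i j, theta4.Adj i j → G.Adj (g i) (g j))
    (hg13 : g 1 ≠ g 3) (hfg : ∀ i j, f i ≠ g j) : Contains G c3Theta4 := by
  have hf_inj : Injective f := fun i j h => by_contra fun hij => (hf i j hij).ne h
  have hg_inj : Injective g := by
    intro i j h
    by_contra hij
    by_cases h13 : s(i, j) = s(1, 3)
    · rcases Sym2.eq_iff.mp h13 with ⟨rfl, rfl⟩ | ⟨rfl, rfl⟩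
      exacts [hg13 h, hg13 h.symm]
    · exact (hg i j (by simp [theta4, hij, h13])).ne h
  refine ⟨⟨Sum.elim f g, fun {x y} hxy => ?_⟩, hf_inj.sumElim hg_inj hfg⟩
  rcases x with x | x <;> rcases y with y | y <;> simp [c3Theta4] at hxy ⊢
  exacts [hf x y hxy.1, hxy.2.elim (hg x y) fun h => (hg y x h).symm]

lemma contains_c3Theta4_of_adj {V : Type} {G : SimpleGraph V} {a b c u p q r : V}
    (hab : G.Adj a b) (hbc : G.Adj b c) (hca : G.Adj c a)
    (hup : G.Adj u p) (huq : G.Adj u q) (hur : G.Adj u r) (hpq : G.Adj p q) (hqr : G.Adj q r)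
    (hpr : p ≠ r) (hdisj : Disjoint ({a, b, c} : Set V) {u, p, q, r}) :
    Contains G c3Theta4 := by
  refine contains_c3Theta4_of_sumElim (f := ![a, b, c]) (g := ![u, p, q, r])
    (fun i j hij => ?_) (fun i j hij => ?_) hpr (fun i j => hdisj.ne_of_mem ?_ ?_)
  · fin_cases i <;> fin_cases j <;> simp_all [G.adj_comm]
  · fin_cases i <;> fin_cases j <;> simp_all [theta4, G.adj_comm]
  · fin_cases i <;> simp
  · fin_cases j <;> simp

lemma Finset.exists_mem_forall_neighbour_notMem {α : Type*} [AddGroupWithOne α] [DecidableEq α]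
    {S P : Finset α} (h : 3 * P.card < S.card) : ∃ j ∈ S, j - 1 ∉ P ∧ j ∉ P ∧ j + 1 ∉ P := by
  set B := P.image (· + 1) ∪ P ∪ P.image (· - 1)
  have hB : B.card ≤ 3 * P.card := by
    grw [card_union_le, card_union_le, card_image_le, card_image_le]
    omega
  obtain ⟨j, hjS, hjB⟩ := exists_mem_notMem_of_card_lt_card (hB.trans_lt h)
  refine ⟨j, hjS, fun h => hjB ?_, fun h => hjB ?_, fun h => hjB ?_⟩
  · exact mem_union_left _ (mem_union_left _ (mem_image.2 ⟨_, h, sub_add_cancel j 1⟩))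
  · exact mem_union_left _ (mem_union_right _ h)
  · exact mem_union_right _ (mem_image.2 ⟨_, h, add_sub_cancel_right j 1⟩)

lemma ZMod.sub_one_ne_add_one {t : ℕ} (ht : 2 < t) (j : ZMod t) : j - 1 ≠ j + 1 := by
  intro h
  have h2 : ((2 : ℕ) : ZMod t) = 0 := by push_cast; linear_combination -h
  exact absurd (Nat.le_of_dvd two_pos ((ZMod.natCast_eq_zero_iff 2 t).1 h2)) (by omega)

/-- Let u have t ≥ 10 distinct neighbors w 0, …, w (t−1) arranged
cyclically (indexed by `ZMod t`), and suppose for each index j in a set S of at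
least 10 indices the edge u-(w j) lies in a Θ₄ on {u, w (j−1), w j, w (j+1)},
i.e. the two triangles u (w (j−1)) (w j) and u (w j) (w (j+1)) are present.
If G contains a triangle avoiding u, then G contains C₃ ∪̇ Θ₄. -/
theorem stmt8 {V : Type} (G : SimpleGraph V) (u : V) (t : ℕ) (ht : 10 ≤ t)
    (w : ZMod t → V) (hw : Function.Injective w)
    (hnbr : ∀ i : ZMod t, G.Adj u (w i))
    (S : Finset (ZMod t)) (hS : 10 ≤ S.card)
    (hTheta : ∀ j ∈ S, G.Adj (w (j - 1)) (w j) ∧ G.Adj (w j) (w (j + 1)))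
    (a b c : V) (hab : G.Adj a b) (hbc : G.Adj b c) (hca : G.Adj c a)
    (hau : a ≠ u) (hbu : b ≠ u) (hcu : c ≠ u) :
    Contains G c3Theta4 := by
  classical
  set P := ({a, b, c} : Finset V).preimage w hw.injOn
  have hP : P.card ≤ 3 :=
    (Finset.card_le_card_of_injOn w (fun i hi => Finset.mem_preimage.1 hi) hw.injOn).trans
      Finset.card_le_three
  obtain ⟨j, hjS, hj₀, hj₁, hj₂⟩ :=
    Finset.exists_mem_forall_neighbour_notMem (P := P) (S := S) (by omega)
  obtain ⟨hpq, hqr⟩ := hTheta j hjS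
  refine contains_c3Theta4_of_adj hab hbc hca (hnbr _) (hnbr _) (hnbr _) hpq hqr
    (hw.ne (ZMod.sub_one_ne_add_one (by omega) j)) ?_
  simp only [P, Finset.mem_preimage, Finset.mem_insert, Finset.mem_singleton] at hj₀ hj₁ hj₂
  simp only [Set.disjoint_insert_right, Set.disjoint_singleton_right, Set.mem_insert_iff,
    Set.mem_singleton_iff]
  grind
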